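/- arXiv:1705.03295 — 5 statements merged into one kernel-verified Lean document; each statement's English description precedes it below -/
import Mathlib

section
/- Let M1, M2, M3 in SL(2,C). Define p_i = tr(M_i), p_{ij} = tr(M_i M_j) for i > j, and p_{321} = tr(M3 M2 M1). Then p_{32}p_{31}p_{21} + p_{32}^2 + p_{31}^2 + p_{21}^2 − (p_1 p_{321} + p_2 p_3)p_{32} − (p_2 p_{321} + p_1 p_3)p_{31} − (p_3 p_{321} + p_1 p_2)p_{21} + p_1^2 + p_2^2 + p_3^2 + p_{321}^2 + p_1 p_2 p_3 p_{321} − 4 = 0. -/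
abbrev SL2 := Matrix.SpecialLinearGroup (Fin 2) ℂ

noncomputable def tr (A : SL2) : ℂ := (A : Matrix (Fin 2) (Fin 2) ℂ).trace

/-!
For 2 × 2 matrices `A`, `B`, `C` the traces `tr (A B C)` and `tr (A C B)` are the two roots of a
quadratic whose coefficients are polynomials in the six traces `tr A, …, tr (A B)`: their sum comes
from the polarized Cayley–Hamilton identity, and their product is a polynomial identity that holds
for all matrices once the constants are homogenized by determinants. The Fricke relation is this
quadratic evaluated at `tr (A B C)`, with all determinants equal to `1`.
-/

namespace Matrix

variable {R : Type*} [CommRing R]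

theorem mul_add_mul_fin_two (B C : Matrix (Fin 2) (Fin 2) R) :
    B * C + C * B = B.trace • C + C.trace • B + (trace (B * C) - B.trace * C.trace) • 1 := by
  ext i j
  fin_cases i <;> fin_cases j <;>
    simp [trace_fin_two, mul_apply, Fin.sum_univ_two] <;> ring

theorem trace_mul_mul_add_trace_mul_mul_fin_two (A B C : Matrix (Fin 2) (Fin 2) R) :
    trace (A * B * C) + trace (A * C * B) =
      A.trace * trace (B * C) + B.trace * trace (A * C) + C.trace * trace (A * B)
        - A.trace * B.trace * C.trace := by
  have h := congrArg (fun X => trace (A * X)) (mul_add_mul_fin_two B C)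
  simp only [Matrix.mul_add, Matrix.mul_smul, Matrix.mul_one, ← Matrix.mul_assoc, trace_add,
    trace_smul, smul_eq_mul] at h
  linear_combination h

theorem trace_mul_mul_mul_trace_mul_mul_fin_two (A B C : Matrix (Fin 2) (Fin 2) R) :
    trace (A * B * C) * trace (A * C * B) =
      trace (A * B) * trace (A * C) * trace (B * C)
        + A.det * (trace (B * C) ^ 2 - B.trace * C.trace * trace (B * C))
        + B.det * (trace (A * C) ^ 2 - A.trace * C.trace * trace (A * C))
        + C.det * (trace (A * B) ^ 2 - A.trace * B.trace * trace (A * B))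
        + B.det * C.det * A.trace ^ 2 + A.det * C.det * B.trace ^ 2
        + A.det * B.det * C.trace ^ 2 - 4 * A.det * B.det * C.det := by
  simp only [trace_fin_two, det_fin_two, mul_apply, Fin.sum_univ_two]
  ring

end Matrix

theorem fricke_relation (M1 M2 M3 : SL2) :
    tr (M3 * M2) * tr (M3 * M1) * tr (M2 * M1)
      + tr (M3 * M2) ^ 2 + tr (M3 * M1) ^ 2 + tr (M2 * M1) ^ 2
      - (tr M1 * tr (M3 * M2 * M1) + tr M2 * tr M3) * tr (M3 * M2)
      - (tr M2 * tr (M3 * M2 * M1) + tr M1 * tr M3) * tr (M3 * M1)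
      - (tr M3 * tr (M3 * M2 * M1) + tr M1 * tr M2) * tr (M2 * M1)
      + tr M1 ^ 2 + tr M2 ^ 2 + tr M3 ^ 2 + tr (M3 * M2 * M1) ^ 2
      + tr M1 * tr M2 * tr M3 * tr (M3 * M2 * M1) - 4 = 0 := by
  have hsum := Matrix.trace_mul_mul_add_trace_mul_mul_fin_two (M3 : Matrix (Fin 2) (Fin 2) ℂ) M2 M1
  have hprod := Matrix.trace_mul_mul_mul_trace_mul_mul_fin_two (M3 : Matrix (Fin 2) (Fin 2) ℂ) M2 M1
  simp only [Matrix.SpecialLinearGroup.det_coe, one_mul, mul_one] at hprod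
  simp only [tr, Matrix.SpecialLinearGroup.coe_mul]
  linear_combination ((M3 : Matrix (Fin 2) (Fin 2) ℂ) * M2 * M1).trace * hsum - hprod
end

section
/- Let M1, M2, M3, M4 in SL(2,C) be such that the triples (M1,M2,M3), (M2,M3,M4), and (M1,M2,M4) each have a common eigenvector (i.e., generate reducible groups). Then the group generated by M1, M2, M3, M4 has a common eigenvector, i.e., is reducible. -/
/-- A set of SL(2,ℂ) matrices has a common eigenvector. -/
def HasCommonEigenvector (S : Set SL2) : Prop :=
  ∃ v : Fin 2 → ℂ, v ≠ 0 ∧ ∀ M ∈ S,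
    ∃ c : ℂ, Matrix.mulVec (M : Matrix (Fin 2) (Fin 2) ℂ) v = c • v

lemma quad_three_roots (a b c x1 y1 x2 y2 x3 y3 : ℂ)
    (e1 : a * x1^2 + b * x1 * y1 + c * y1^2 = 0)
    (e2 : a * x2^2 + b * x2 * y2 + c * y2^2 = 0)
    (e3 : a * x3^2 + b * x3 * y3 + c * y3^2 = 0)
    (d12 : x1 * y2 - x2 * y1 ≠ 0)
    (d13 : x1 * y3 - x3 * y1 ≠ 0)
    (d23 : x2 * y3 - x3 * y2 ≠ 0) :
    a = 0 ∧ b = 0 ∧ c = 0 := by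
  have hd : (x1*y2 - x2*y1) * (x1*y3 - x3*y1) * (x2*y3 - x3*y2) ≠ 0 :=
    mul_ne_zero (mul_ne_zero d12 d13) d23
  have ha : a * ((x1*y2 - x2*y1) * (x1*y3 - x3*y1) * (x2*y3 - x3*y2)) = 0 := by
    linear_combination (y2*y3*(x2*y3 - x3*y2)) * e1 - (y1*y3*(x1*y3 - x3*y1)) * e2 + (y1*y2*(x1*y2 - x2*y1)) * e3
  have hc : c * ((x1*y2 - x2*y1) * (x1*y3 - x3*y1) * (x2*y3 - x3*y2)) = 0 := by
    linear_combination (x2*x3*(x2*y3 - x3*y2)) * e1 - (x1*x3*(x1*y3 - x3*y1)) * e2 + (x1*x2*(x1*y2 - x2*y1)) * e3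
  have hb : b * ((x1*y2 - x2*y1) * (x1*y3 - x3*y1) * (x2*y3 - x3*y2)) = 0 := by
    linear_combination (-(x2*y3 + x3*y2)*(x2*y3 - x3*y2)) * e1 + ((x1*y3 + x3*y1)*(x1*y3 - x3*y1)) * e2 - ((x1*y2 + x2*y1)*(x1*y2 - x2*y1)) * e3
  exact ⟨by simpa [hd] using mul_eq_zero.mp ha |>.resolve_right hd,
         by simpa [hd] using mul_eq_zero.mp hb |>.resolve_right hd,
         by simpa [hd] using mul_eq_zero.mp hc |>.resolve_right hd⟩

/-- If the cross product vanishes and v ≠ 0, then w is a multiple of v. -/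
lemma cross_zero_dep (v w : Fin 2 → ℂ) (hv : v ≠ 0)
    (h : v 0 * w 1 - v 1 * w 0 = 0) : ∃ c : ℂ, w = c • v := by
  rcases eq_or_ne (v 0) 0 with h0 | h0
  · have h1 : v 1 ≠ 0 := by
      intro h1; apply hv; funext i; fin_cases i <;> simp [h0, h1]
    refine ⟨w 1 / v 1, ?_⟩
    funext i; fin_cases i
    · show w 0 = w 1 / v 1 * v 0
      rw [h0, mul_zero]
      have hz : v 1 * w 0 = 0 := by rw [h0, zero_mul, zero_sub, neg_eq_zero] at h; exact h
      exact (mul_eq_zero.mp hz).resolve_left h1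
    · show w 1 = w 1 / v 1 * v 1
      field_simp
  · refine ⟨w 0 / v 0, ?_⟩
    funext i; fin_cases i
    · show w 0 = w 0 / v 0 * v 0
      field_simp
    · show w 1 = w 0 / v 0 * v 1
      field_simp; linear_combination h

/-- Transfer eigenvector property along parallelism. -/
lemma eigen_of_smul (A : Matrix (Fin 2) (Fin 2) ℂ) (v w : Fin 2 → ℂ) (d : ℂ)
    (hw : w ≠ 0) (hwv : w = d • v) (c : ℂ) (h : A.mulVec w = c • w) :
    A.mulVec v = c • v := by
  have hd : d ≠ 0 := by rintro rfl; simp at hwv; exact hw hwv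
  have h2 : d • A.mulVec v = d • (c • v) := by
    rw [← Matrix.mulVec_smul, ← hwv, h, hwv, smul_comm]
  exact smul_right_injective _ hd h2

theorem three_reducible_triples_reducible (M1 M2 M3 M4 : SL2)
    (hns : ∀ M ∈ ({M1, M2, M3, M4} : Set SL2), ∀ c : ℂ,
      (M : Matrix (Fin 2) (Fin 2) ℂ) ≠ c • (1 : Matrix (Fin 2) (Fin 2) ℂ))
    (h123 : HasCommonEigenvector {M1, M2, M3})
    (h234 : HasCommonEigenvector {M2, M3, M4})
    (h124 : HasCommonEigenvector {M1, M2, M4}) :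
    HasCommonEigenvector {M1, M2, M3, M4} := by
  obtain ⟨u, hu, hU⟩ := h123
  obtain ⟨w, hw, hW⟩ := h234
  obtain ⟨x, hx, hX⟩ := h124
  have hU1 := hU M1 (by simp); have hU2 := hU M2 (by simp); have hU3 := hU M3 (by simp)
  have hW2 := hW M2 (by simp); have hW3 := hW M3 (by simp); have hW4 := hW M4 (by simp)
  have hX1 := hX M1 (by simp); have hX2 := hX M2 (by simp); have hX4 := hX M4 (by simp)
  -- case: u and w parallel
  rcases eq_or_ne (u 0 * w 1 - u 1 * w 0) 0 with huw | huw
  · obtain ⟨d, hd⟩ := cross_zero_dep u w hu huw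
    refine ⟨u, hu, ?_⟩
    intro M hM
    rcases hM with rfl | rfl | rfl | rfl
    · exact hU1
    · exact hU2
    · exact hU3
    · obtain ⟨c, hc⟩ := hW4
      exact ⟨c, eigen_of_smul _ u w d hw hd c hc⟩
  rcases eq_or_ne (u 0 * x 1 - u 1 * x 0) 0 with hux | hux
  · obtain ⟨d, hd⟩ := cross_zero_dep u x hu hux
    refine ⟨u, hu, ?_⟩
    intro M hM
    rcases hM with rfl | rfl | rfl | rfl
    · exact hU1
    · exact hU2
    · exact hU3
    · obtain ⟨c, hc⟩ := hX4
      exact ⟨c, eigen_of_smul _ u x d hx hd c hc⟩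
  rcases eq_or_ne (w 0 * x 1 - w 1 * x 0) 0 with hwx | hwx
  · obtain ⟨d, hd⟩ := cross_zero_dep w x hw hwx
    refine ⟨w, hw, ?_⟩
    intro M hM
    rcases hM with rfl | rfl | rfl | rfl
    · obtain ⟨c, hc⟩ := hX1
      exact ⟨c, eigen_of_smul _ w x d hx hd c hc⟩
    · exact hW2
    · exact hW3
    · exact hW4
  -- otherwise: u, w, x pairwise independent eigenvectors of M2 ⇒ M2 scalar, contradiction
  exfalso
  set A : Matrix (Fin 2) (Fin 2) ℂ := (M2 : Matrix (Fin 2) (Fin 2) ℂ) with hA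
  obtain ⟨cu, hcu⟩ := hU2
  obtain ⟨cw, hcw⟩ := hW2
  obtain ⟨cx, hcx⟩ := hX2
  -- turn each eigen equation into a quadratic relation
  have key : ∀ (v : Fin 2 → ℂ) (c : ℂ), A.mulVec v = c • v →
      (-(A 1 0)) * (v 0)^2 + (A 0 0 - A 1 1) * (v 0) * (v 1) + (A 0 1) * (v 1)^2 = 0 := by
    intro v c h
    have h0 := congrFun h 0
    have h1 := congrFun h 1
    simp [Matrix.mulVec, dotProduct, Fin.sum_univ_two] at h0 h1
    linear_combination (v 1) * h0 - (v 0) * h1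
  have eu := key u cu hcu
  have ew := key w cw hcw
  have ex := key x cx hcx
  obtain ⟨ha10, hab, ha01⟩ := quad_three_roots (-(A 1 0)) (A 0 0 - A 1 1) (A 0 1)
    (u 0) (u 1) (w 0) (w 1) (x 0) (x 1) eu ew ex
    (fun h => huw (by linear_combination h)) (fun h => hux (by linear_combination h))
    (fun h => hwx (by linear_combination h))
  apply hns M2 (by simp) (A 0 0)
  show A = A 0 0 • 1
  have h10 : A 1 0 = 0 := neg_eq_zero.mp ha10
  have h11 : A 0 0 = A 1 1 := sub_eq_zero.mp hab
  ext i j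
  fin_cases i <;> fin_cases j <;>
    simp [Matrix.smul_apply, Matrix.one_apply, ha01, h10, ← h11]
end

section
/- Let M1, M2, M3, M4 ∈ SL(2,C), and set p_i = tr M_i, p_{ij} = tr(M_iM_j), p_{ijk} = tr(M_iM_jM_k), p∞ = tr(M4M3M2M1). Then 2p∞ = p1p2p3p4 + p1p_{432} + p2p_{431} + p3p_{421} + p4p_{321} + p_{21}p_{43} + p_{32}p_{41} − p1p2p_{43} − p1p4p_{32} − p2p3p_{41} − p3p4p_{21} − p_{42}p_{31}. -/
theorem trace_identity_f5 (M1 M2 M3 M4 : SL2) :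
    2 * tr (M4 * M3 * M2 * M1) =
      tr M1 * tr M2 * tr M3 * tr M4
      + tr M1 * tr (M4 * M3 * M2) + tr M2 * tr (M4 * M3 * M1)
      + tr M3 * tr (M4 * M2 * M1) + tr M4 * tr (M3 * M2 * M1)
      + tr (M2 * M1) * tr (M4 * M3) + tr (M3 * M2) * tr (M4 * M1)
      - tr M1 * tr M2 * tr (M4 * M3) - tr M1 * tr M4 * tr (M3 * M2)
      - tr M2 * tr M3 * tr (M4 * M1) - tr M3 * tr M4 * tr (M2 * M1)
      - tr (M4 * M2) * tr (M3 * M1) := by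
  simp only [tr, Matrix.SpecialLinearGroup.coe_mul, Matrix.trace, Matrix.diag,
    Matrix.mul_apply, Fin.sum_univ_succ, Fin.sum_univ_zero]
  ring
end

section
/- Let M1, M2, M3, M4 ∈ SL(2,C). With the trace notation p_i = tr M_i, p_{ij} = tr(M_iM_j), p_{ijk}=tr(M_iM_jM_k), p∞=tr(M4M3M2M1), the following identity holds: −p2p4 + p_{21}p_{41} + 2p_{42} − p1p_{421} + p_{32}p_{43} − p_{321}p_{431} − p3p_{432} + p_{31}p∞ = 0. -/
/-!
For `2 × 2` matrices `A + adj A = tr A • 1`, hence `tr (A B) + tr (A⁻¹ B) = tr A tr B` on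
`SL(2)`. Seven instances of this skein relation, each one adjusted by cyclic rotations of the
trace, express every product of traces in the identity as a sum of two traces of words in the
`Mᵢ`. Besides `tr (M₄ M₂)`, six auxiliary words occur, each in exactly two of these instances,
so the alternating sum collapses to `0`.
-/

namespace Matrix

variable {R : Type*} [CommRing R]

theorem add_adjugate_fin_two (A : Matrix (Fin 2) (Fin 2) R) : A + adjugate A = trace A • 1 := by
  rw [adjugate_fin_two, trace_fin_two]
  ext i j
  fin_cases i <;> fin_cases j <;> simp [add_comm]

theorem trace_mul_add_trace_adjugate_mul (A B : Matrix (Fin 2) (Fin 2) R) :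
    trace (A * B) + trace (adjugate A * B) = trace A * trace B := by
  rw [← trace_add, ← add_mul, add_adjugate_fin_two, smul_mul, one_mul, trace_smul, smul_eq_mul]

end Matrix

theorem tr_mul_comm (A B : SL2) : tr (A * B) = tr (B * A) := by
  simp only [tr, Matrix.SpecialLinearGroup.coe_mul]
  exact Matrix.trace_mul_comm _ _

theorem tr_mul_add_tr_inv_mul (A B : SL2) : tr (A * B) + tr (A⁻¹ * B) = tr A * tr B := by
  simpa only [tr, Matrix.SpecialLinearGroup.coe_mul, Matrix.SpecialLinearGroup.coe_inv] using
    Matrix.trace_mul_add_trace_adjugate_mul (A : Matrix (Fin 2) (Fin 2) ℂ) B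

theorem trace_identity_f12 (M1 M2 M3 M4 : SL2) :
    -(tr M2 * tr M4) + tr (M2 * M1) * tr (M4 * M1) + 2 * tr (M4 * M2)
      - tr M1 * tr (M4 * M2 * M1) + tr (M3 * M2) * tr (M4 * M3)
      - tr (M3 * M2 * M1) * tr (M4 * M3 * M1) - tr M3 * tr (M4 * M3 * M2)
      + tr (M3 * M1) * tr (M4 * M3 * M2 * M1) = 0 := by
  have h21_41 : tr (M2 * M1) * tr (M4 * M1) = tr (M1 * M2 * M1 * M4) + tr (M2⁻¹ * M4) := by
    rw [tr_mul_comm M2, tr_mul_comm M4, ← tr_mul_add_tr_inv_mul]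
    congr 2 <;> group
  have h2_4 : tr M2 * tr M4 = tr (M4 * M2) + tr (M2⁻¹ * M4) := by
    rw [← tr_mul_add_tr_inv_mul, tr_mul_comm M2]
  have h1_421 : tr M1 * tr (M4 * M2 * M1)
      = tr (M1 * M2 * M1 * M4) + tr (M1⁻¹ * M2 * M1 * M4) := by
    rw [mul_assoc M4, tr_mul_comm M4, ← tr_mul_add_tr_inv_mul]
    congr 2 <;> group
  have h3_432 : tr M3 * tr (M4 * M3 * M2) = tr (M3 * M2 * M4 * M3) + tr (M4 * M2) := by
    rw [tr_mul_comm (M4 * M3), ← tr_mul_add_tr_inv_mul, tr_mul_comm M3⁻¹, tr_mul_comm M4 M2]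
    congr 2 <;> group
  have h32_43 : tr (M3 * M2) * tr (M4 * M3)
      = tr (M3 * M2 * M4 * M3) + tr (M2⁻¹ * M3⁻¹ * M4 * M3) := by
    rw [← tr_mul_add_tr_inv_mul]
    congr 2 <;> group
  have h321_431 : tr (M3 * M2 * M1) * tr (M4 * M3 * M1)
      = tr (M1 * M3 * M2 * M1 * M4 * M3) + tr (M2⁻¹ * M3⁻¹ * M4 * M3) := by
    rw [tr_mul_comm (M3 * M2), tr_mul_comm (M4 * M3), ← tr_mul_add_tr_inv_mul]
    congr 2 <;> group
  have h31_4321 : tr (M3 * M1) * tr (M4 * M3 * M2 * M1)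
      = tr (M1 * M3 * M2 * M1 * M4 * M3) + tr (M1⁻¹ * M2 * M1 * M4) := by
    rw [show M4 * M3 * M2 * M1 = M4 * (M3 * M2 * M1) by group, tr_mul_comm M4,
      ← tr_mul_add_tr_inv_mul, mul_assoc M3 M1, tr_mul_comm M3]
    congr 2 <;> group
  linear_combination h21_41 - h2_4 - h1_421 - h3_432 + h32_43 - h321_431 + h31_4321
end

section
/- Let Λ = diag(λ, λ^{-1}) ∈ SL(2,C) with λ ≠ ±1, and let M ∈ SL(2,C). Then M_{12}·M_{21} = −g(tr Λ, tr M, tr(ΛM))/((tr Λ)² − 4), where g(x,y,z) = x² + y² + z² − xyz − 4. -/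
/-- The Fricke polynomial g(x,y,z) = x² + y² + z² − xyz − 4. -/
def gP (x y z : ℂ) : ℂ := x ^ 2 + y ^ 2 + z ^ 2 - x * y * z - 4

/-!
With `Λ = diag(a, b)`, `ab = 1`, the traces `tr M = M₀₀ + M₁₁` and `tr ΛM = a M₀₀ + b M₁₁` determine
the diagonal of `M` through a linear system of determinant `a - b`, and `(a - b)² = (tr Λ)² - 4`.
Hence `((tr Λ)² - 4) M₀₀ M₁₁` is a polynomial in the three traces, and `det M = 1` turns it into
`M₀₁ M₁₀ = M₀₀ M₁₁ - 1`. Without using `ab = 1` the two sides differ by `(ab - 1)(M₀₀ - M₁₁)²`.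
-/

namespace Matrix

variable {R : Type*} [CommRing R]

theorem trace_diagonal_fin_two (a b : R) : (diagonal ![a, b]).trace = a + b := by
  simp

theorem trace_diagonal_mul_fin_two (a b : R) (M : Matrix (Fin 2) (Fin 2) R) :
    (diagonal ![a, b] * M).trace = a * M 0 0 + b * M 1 1 := by
  simp [trace_fin_two, mul_apply]

theorem trace_sq_sub_four_mul_offdiag {a b : R} (hab : a * b = 1) {M : Matrix (Fin 2) (Fin 2) R}
    (hM : M.det = 1) :
    let x := (diagonal ![a, b]).trace
    let y := M.trace
    let z := (diagonal ![a, b] * M).trace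
    (x ^ 2 - 4) * (M 0 1 * M 1 0) = -(x ^ 2 + y ^ 2 + z ^ 2 - x * y * z - 4) := by
  rw [det_fin_two] at hM
  simp only [trace_diagonal_fin_two, trace_diagonal_mul_fin_two]
  rw [trace_fin_two]
  linear_combination (-(M 0 0 - M 1 1) ^ 2) * hab - ((a + b) ^ 2 - 4) * hM

end Matrix

theorem add_inv_sq_sub_four_ne_zero {K : Type*} [Field K] {lam : K} (hlam0 : lam ≠ 0)
    (hlam1 : lam ≠ 1) (hlam2 : lam ≠ -1) : (lam + lam⁻¹) ^ 2 - 4 ≠ 0 := by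
  have hsq : (lam + lam⁻¹) ^ 2 - 4 = ((lam - 1) * (lam + 1) / lam) ^ 2 := by
    field_simp
    ring
  rw [hsq]
  have := sub_ne_zero.mpr hlam1
  have := add_eq_zero_iff_eq_neg.not.mpr hlam2
  positivity

theorem offdiag_product_formula (lam : ℂ) (hlam0 : lam ≠ 0)
    (hlam1 : lam ≠ 1) (hlam2 : lam ≠ -1) (M : SL2) :
    (M : Matrix (Fin 2) (Fin 2) ℂ) 0 1 * (M : Matrix (Fin 2) (Fin 2) ℂ) 1 0 =
      -(gP (Matrix.diagonal ![lam, lam⁻¹] : Matrix (Fin 2) (Fin 2) ℂ).trace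
          ((M : Matrix (Fin 2) (Fin 2) ℂ).trace)
          ((Matrix.diagonal ![lam, lam⁻¹] * (M : Matrix (Fin 2) (Fin 2) ℂ)).trace)) /
        ((Matrix.diagonal ![lam, lam⁻¹] : Matrix (Fin 2) (Fin 2) ℂ).trace ^ 2 - 4) := by
  have hden : (Matrix.diagonal ![lam, lam⁻¹]).trace ^ 2 - 4 ≠ 0 := by
    rw [Matrix.trace_diagonal_fin_two]
    exact add_inv_sq_sub_four_ne_zero hlam0 hlam1 hlam2
  rw [eq_div_iff hden, mul_comm]
  exact Matrix.trace_sq_sub_four_mul_offdiag (mul_inv_cancel₀ hlam0) M.det_coe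
end
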